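/- arXiv:1912.11783 — 2 statements merged into one kernel-verified Lean document; each statement's English description precedes it below -/
import Mathlib

section
/- (Theorem 1, necessity.) Let K ≥ 2, M ≥ 1, N ≥ 1, τ3 ≥ 0 be integers, let g_1,…,g_N ∈ ℂ^M be vectors that are not all zero (it suffices that g_n ≠ 0 for some n), and let a_{k,i} ∈ ℂ (k = 2,…,K, i = 1,…,τ3) and φ_{n,i} ∈ ℂ (n = 1,…,N, i = 1,…,τ3) be arbitrary. If the Phase III observation map L is injective, then τ3 ≥ K − 1. -/
/-- Theorem 1 (necessity): if some `g n ≠ 0` and the Phase III observation map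
`λ ↦ (∑_{k} ∑_{n} φ n i * a k i * λ k n * g n)_{i}` (users `k = 2,…,K`
indexed by `Fin (K-1)`, time slots by `Fin τ3`) is injective, then
`τ3 ≥ K - 1`. -/
theorem phaseIII_necessity_MgeN
    (K M N τ3 : ℕ) (hK : 2 ≤ K) (hM : 1 ≤ M) (hN : 1 ≤ N)
    (g : Fin N → Fin M → ℂ) (hg : ∃ n, g n ≠ 0)
    (a : Fin (K - 1) → Fin τ3 → ℂ) (φ : Fin N → Fin τ3 → ℂ)
    (hL : Function.Injective
      (fun lam : Matrix (Fin (K - 1)) (Fin N) ℂ =>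
        fun (i : Fin τ3) (m : Fin M) =>
          ∑ k : Fin (K - 1), ∑ n : Fin N, φ n i * a k i * lam k n * g n m)) :
    K - 1 ≤ τ3 := by
  obtain ⟨n0, hg0⟩ := hg
  let f : (Fin (K - 1) → ℂ) →ₗ[ℂ] (Fin τ3 → ℂ) :=
  { toFun := fun c i => ∑ k, φ n0 i * a k i * c k
    map_add' := by
      intro x y; funext i
      simp [mul_add, Finset.sum_add_distrib]
    map_smul' := by
      intro r x; funext i
      simp [Finset.mul_sum]
      apply Finset.sum_congr rfl
      intro k _
      ring }
  have hf : Function.Injective f := by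
    rw [← LinearMap.ker_eq_bot, LinearMap.ker_eq_bot']
    intro c hc
    set lam : Matrix (Fin (K - 1)) (Fin N) ℂ :=
      fun k n => if n = n0 then c k else 0 with hlam
    have h0 : (fun (i : Fin τ3) (m : Fin M) =>
        ∑ k : Fin (K - 1), ∑ n : Fin N, φ n i * a k i * lam k n * g n m)
        = (fun (i : Fin τ3) (m : Fin M) =>
        ∑ k : Fin (K - 1), ∑ n : Fin N, φ n i * a k i * (0 : Matrix (Fin (K-1)) (Fin N) ℂ) k n * g n m) := by
      funext i m
      have : ∀ k : Fin (K - 1), ∑ n : Fin N, φ n i * a k i * lam k n * g n m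
          = φ n0 i * a k i * c k * g n0 m := by
        intro k
        rw [Finset.sum_eq_single n0]
        · simp [hlam]
        · intro b _ hb; simp [hlam, hb]
        · intro h; exact absurd (Finset.mem_univ n0) h
      rw [Finset.sum_congr rfl (fun k _ => this k)]
      have hfc : (∑ k : Fin (K - 1), φ n0 i * a k i * c k) = 0 := congrFun hc i
      simp [← Finset.sum_mul, hfc]
    have := hL h0
    funext k
    have := congrFun (congrFun this k) n0
    simpa [hlam] using this
  have := LinearMap.finrank_le_finrank_of_injective hf
  simpa using this
end

section
/- (Theorem 2, achievability.) Let K ≥ 2 and 1 ≤ M < N be integers, and let g_1,…,g_N ∈ ℂ^M be vectors such that every subset of {g_1,…,g_N} of cardinality at most M is linearly independent. Set τ3 = ⌈(K−1)·N/M⌉. Then there exist pilot symbols a_{k,i} ∈ {0,1} (k = 2,…,K, i = 1,…,τ3) and reflection coefficients φ_{n,i} ∈ {0,1} (n = 1,…,N, i = 1,…,τ3) such that the Phase III observation map L is injective; that is, all (K−1)·N scaling factors λ_{k,n} can be perfectly recovered from τ3 = ⌈(K−1)·N/M⌉ noiseless received signals. -/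
/-!
Order the unknowns `λ k n` lexicographically, `(k, n)` having position `k * N + n`, and measure
them `M` at a time: in slot `s` user `k` transmits and element `n` reflects iff some unknown
`(k, n)` has its position in `[s * M, s * M + M)`. At most `M` elements reflect in a slot, so the
independence hypothesis lets slot `s` return, for every reflecting element `n`, the sum of `λ k n`
over the transmitting users `k`. As `M < N`, a slot meets at most two consecutive users. Hence,
for fixed `n`, the equation read off at the slot of `(k, n)` involves `λ k n` and at most one
neighbour `λ (k ± 1) n`, whose own equation does not involve `λ k n`; following these links away
from `k` ends at an equation with a single term.
-/

open Finset

section Chain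

variable {ι G : Type*} [LinearOrder ι] [AddCommMonoid G] {c : ι → G} {A : ι → Finset ι}

theorem eq_zero_of_sum_eq_zero_of_forall_le [WellFoundedGT ι]
    (hsum : ∀ k, ∑ j ∈ A k, c j = 0) (hself : ∀ k, k ∈ A k)
    (hcov : ∀ k, ∀ i ∈ A k, ∀ j ∈ A k, i < j → i ⋖ j)
    (hasymm : ∀ j k, j ∈ A k → k ∈ A j → j = k) (k : ι) (hk : ∀ j ∈ A k, k ≤ j) :
    c k = 0 := by
  induction k using WellFoundedGT.induction with
  | _ k ih =>
  by_cases hA : A k = {k}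
  · simpa [hA] using hsum k
  obtain ⟨j, hj, hjk⟩ : ∃ j ∈ A k, j ≠ k := by
    by_contra! h
    exact hA (eq_singleton_iff_unique_mem.2 ⟨hself k, h⟩)
  have cov (i) (hi : i ∈ A k) (hik : i ≠ k) : k ⋖ i :=
    hcov k k (hself k) i hi ((hk i hi).lt_of_ne' hik)
  have hAk : A k = {k, j} := by
    refine Subset.antisymm (fun i hi => ?_) (insert_subset (hself k) (singleton_subset_iff.2 hj))
    by_cases hik : i = k
    · simp [hik]
    · simp [(cov i hi hik).unique_right (cov j hj hjk)]
  have hcj : c j = 0 := by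
    refine ih j (cov j hj hjk).lt fun i hi => le_of_not_gt fun hij => hjk ?_
    have hik : i = k := (hcov j i hi j (hself j) hij).unique_left (cov j hj hjk)
    exact hasymm j k hj (hik ▸ hi)
  simpa [hAk, sum_pair hjk.symm, hcj] using hsum k

theorem eq_zero_of_sum_eq_zero_of_covBy [WellFoundedLT ι] [WellFoundedGT ι]
    (hsum : ∀ k, ∑ j ∈ A k, c j = 0) (hself : ∀ k, k ∈ A k)
    (hcov : ∀ k, ∀ i ∈ A k, ∀ j ∈ A k, i < j → i ⋖ j)
    (hasymm : ∀ j k, j ∈ A k → k ∈ A j → j = k) : c = 0 := by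
  funext k
  by_cases hk : ∀ j ∈ A k, k ≤ j
  · exact eq_zero_of_sum_eq_zero_of_forall_le hsum hself hcov hasymm k hk
  have hk' : ∀ j ∈ A k, j ≤ k := by
    push Not at hk
    obtain ⟨i, hi, hik⟩ := hk
    intro j hj
    by_contra! hkj
    exact (hcov k i hi j hj (hik.trans hkj)).2 hik hkj
  exact eq_zero_of_sum_eq_zero_of_forall_le (ι := ιᵒᵈ) (A := A) hsum hself
    (fun k i hi j hj hij => ⟨hij, fun l hil hlj => (hcov k j hj i hi hij).2 hlj hil⟩)
    hasymm k hk'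

end Chain

namespace Nat

theorem lt_add_of_div_eq_div {M p q : ℕ} (hM : 0 < M) (h : p / M = q / M) : p < q + M :=
  calc p < p / M * M + M := lt_div_mul_add hM
    _ = q / M * M + M := by rw [h]
    _ ≤ q + M := Nat.add_le_add_right (div_mul_le_self q M) M

theorem div_eq_of_le_of_le_of_div_eq {M p q r : ℕ} (hpq : p ≤ q) (hqr : q ≤ r)
    (h : p / M = r / M) : q / M = p / M :=
  le_antisymm (h ▸ Nat.div_le_div_right hqr) (Nat.div_le_div_right hpq)

theorem le_ceil_div_mul {𝕜 : Type*} [Field 𝕜] [LinearOrder 𝕜] [IsStrictOrderedRing 𝕜]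
    [FloorSemiring 𝕜] (a : ℕ) {b : ℕ} (hb : 0 < b) : a ≤ ⌈(a : 𝕜) / b⌉₊ * b := by
  have := le_ceil ((a : 𝕜) / b)
  rw [div_le_iff₀ (by exact_mod_cast hb)] at this
  exact_mod_cast this

end Nat

namespace PhaseIII

/-- The slot in which the unknown `λ k n` is measured. -/
def slot (M N k n : ℕ) : ℕ := (k * N + n) / M

def activeUsers (M N Km s : ℕ) : Finset (Fin Km) :=
  univ.filter fun k => ∃ n : Fin N, slot M N k n = s

def activeElements (M N Km s : ℕ) : Finset (Fin N) :=
  univ.filter fun n => ∃ k : Fin Km, slot M N k n = s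

def pilot (M N Km τ : ℕ) (k : Fin Km) (i : Fin τ) : ℂ :=
  if k ∈ activeUsers M N Km i then 1 else 0

def reflection (M N Km τ : ℕ) (n : Fin N) (i : Fin τ) : ℂ :=
  if n ∈ activeElements M N Km i then 1 else 0

variable {M N Km : ℕ}

theorem mem_activeUsers_slot (k : Fin Km) (n : Fin N) : k ∈ activeUsers M N Km (slot M N k n) :=
  mem_filter.2 ⟨mem_univ _, n, rfl⟩

theorem mem_activeElements_slot (k : Fin Km) (n : Fin N) :
    n ∈ activeElements M N Km (slot M N k n) :=
  mem_filter.2 ⟨mem_univ _, k, rfl⟩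

theorem slot_lt {τ k n : ℕ} (hM : 0 < M) (hk : k < Km) (hn : n < N) (hτ : Km * N ≤ τ * M) :
    slot M N k n < τ := by
  have : (k + 1) * N ≤ Km * N := Nat.mul_le_mul_right N hk
  rw [slot, Nat.div_lt_iff_lt_mul hM]
  nlinarith

theorem card_activeElements_le (hM : 0 < M) (s : ℕ) : (activeElements M N Km s).card ≤ M := by
  calc (activeElements M N Km s).card
      = ((activeElements M N Km s).map Fin.valEmbedding).card := (card_map _).symm
    _ ≤ ((Ico (s * M) (s * M + M)).image (· % N)).card := by
      refine card_le_card fun x hx => ?_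
      obtain ⟨n, hn, rfl⟩ := mem_map.1 hx
      obtain ⟨k, rfl⟩ := (mem_filter.1 hn).2
      refine mem_image.2 ⟨k * N + n, mem_Ico.2 ⟨Nat.div_mul_le_self _ _, Nat.lt_div_mul_add hM⟩,
        Nat.mul_add_mod_of_lt n.2⟩
    _ ≤ (Ico (s * M) (s * M + M)).card := card_image_le
    _ = M := by simp

theorem covBy_of_mem_activeUsers (hM : 0 < M) (hMN : M < N) {s : ℕ} {i j : Fin Km}
    (hi : i ∈ activeUsers M N Km s) (hj : j ∈ activeUsers M N Km s) (hij : i < j) : i ⋖ j := by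
  obtain ⟨n, rfl⟩ := (mem_filter.1 hi).2
  obtain ⟨n', hn'⟩ := (mem_filter.1 hj).2
  rw [Fin.covBy_iff, Nat.covBy_iff_add_one_eq]
  by_contra hne
  have hfar : ((i : ℕ) + 2) * N ≤ j * N := Nat.mul_le_mul_right N (by omega)
  have hnear := Nat.lt_add_of_div_eq_div hM hn'
  nlinarith [n.2]

theorem eq_of_mem_activeUsers_of_mem_activeUsers (hM : 0 < M) (hMN : M < N) {j k : Fin Km}
    {n : Fin N} (hj : j ∈ activeUsers M N Km (slot M N k n))
    (hk : k ∈ activeUsers M N Km (slot M N j n)) : j = k := by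
  wlog hjk : j ≤ k generalizing j k
  · exact (this hk hj (le_of_not_ge hjk)).symm
  rcases hjk.eq_or_lt with rfl | hlt
  · rfl
  have hcov := covBy_of_mem_activeUsers hM hMN hj (mem_activeUsers_slot k n) hlt
  rw [Fin.covBy_iff, Nat.covBy_iff_add_one_eq] at hcov
  obtain ⟨n₁, h₁⟩ := (mem_filter.1 hj).2
  obtain ⟨n₂, h₂⟩ := (mem_filter.1 hk).2
  simp only [slot, ← hcov] at h₁ h₂
  -- both slots would contain the position `(j + 1) * N`, but they are `N > M` positions apart
  have hj_edge : ((j + 1) * N) / M = (j * N + n) / M :=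
    Nat.div_eq_of_le_of_le_of_div_eq (by nlinarith [n.2]) (by omega) h₂.symm
  have hk_edge : ((j + 1) * N) / M = (j * N + n₁) / M :=
    Nat.div_eq_of_le_of_le_of_div_eq (by nlinarith [n₁.2]) (by omega) h₁
  have := Nat.lt_add_of_div_eq_div hM (h₁.symm.trans (hk_edge.symm.trans hj_edge))
  nlinarith

section Observation

variable {τ : ℕ} (a : Fin Km → Fin τ → ℂ) (φ : Fin N → Fin τ → ℂ) (g : Fin N → Fin M → ℂ)

def observation : Matrix (Fin Km) (Fin N) ℂ →ₗ[ℂ] Fin τ → Fin M → ℂ where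
  toFun lam i m := ∑ k, ∑ n, φ n i * a k i * lam k n * g n m
  map_add' x y := by ext i m; simp [mul_add, add_mul, sum_add_distrib]
  map_smul' c x := by
    ext i m
    simp only [Matrix.smul_apply, smul_eq_mul, Pi.smul_apply, mul_sum, RingHom.id_apply]
    exact sum_congr rfl fun _ _ => sum_congr rfl fun _ _ => by ring

theorem observation_apply (lam : Matrix (Fin Km) (Fin N) ℂ) (i : Fin τ) :
    observation a φ g lam i = ∑ n, (φ n i * ∑ k, a k i * lam k n) • g n := by
  ext m
  simp only [observation, LinearMap.coe_mk, AddHom.coe_mk, Finset.sum_apply, Pi.smul_apply,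
    smul_eq_mul, mul_sum, sum_mul]
  rw [sum_comm]
  exact sum_congr rfl fun _ _ => sum_congr rfl fun _ _ => by ring

theorem sum_mul_eq_zero_of_observation_eq_zero {lam : Matrix (Fin Km) (Fin N) ℂ}
    (h : observation a φ g lam = 0) {i : Fin τ}
    (hg : LinearIndepOn ℂ g (univ.filter fun n => φ n i ≠ 0 : Finset (Fin N)))
    {n : Fin N} (hn : φ n i ≠ 0) : ∑ k, a k i * lam k n = 0 := by
  have hcoeff := linearIndepOn_finset_iff.1 hg (fun n => φ n i * ∑ k, a k i * lam k n) ?_ n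
    (by simpa using hn)
  · exact (mul_eq_zero.1 hcoeff).resolve_left hn
  rw [sum_filter_of_ne fun n _ hne => by contrapose! hne; simp [hne], ← observation_apply, h,
    Pi.zero_apply]

end Observation

theorem observation_pilot_reflection_injective {τ : ℕ} (hM : 0 < M) (hMN : M < N)
    {g : Fin N → Fin M → ℂ}
    (hg : ∀ s : Finset (Fin N), s.card ≤ M → LinearIndependent ℂ (fun n : s => g n))
    (hτ : Km * N ≤ τ * M) :
    Function.Injective (observation (pilot M N Km τ) (reflection M N Km τ) g) := by
  refine (injective_iff_map_eq_zero _).2 fun lam h => ?_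
  ext k n
  have hsum (k : Fin Km) : ∑ k' ∈ activeUsers M N Km (slot M N k n), lam k' n = 0 := by
    let i : Fin τ := ⟨slot M N k n, slot_lt hM k.2 n.2 hτ⟩
    have hactive :
        univ.filter (fun n => reflection M N Km τ n i ≠ 0) = activeElements M N Km i := by
      ext; simp [reflection]
    have := sum_mul_eq_zero_of_observation_eq_zero _ _ _ h (i := i) (n := n)
      (hactive ▸ hg _ (card_activeElements_le hM i))
      (by simp [reflection, mem_activeElements_slot k n, i])
    simpa [pilot, sum_filter, boole_mul] using this
  exact congrFun (eq_zero_of_sum_eq_zero_of_covBy (c := fun k => lam k n) hsum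
    (fun k => mem_activeUsers_slot k n)
    (fun _ _ hi _ hj hij => covBy_of_mem_activeUsers hM hMN hi hj hij)
    (fun _ _ hj hk => eq_of_mem_activeUsers_of_mem_activeUsers hM hMN hj hk)) k

end PhaseIII

theorem phaseIII_achievability_MltN_general
    (K M N : ℕ) (hM : 1 ≤ M) (hMN : M < N)
    (g : Fin N → Fin M → ℂ)
    (hg : ∀ s : Finset (Fin N), s.card ≤ M →
      LinearIndependent ℂ (fun n : s => g (n : Fin N)))
    (τ3 : ℕ) (hτ3 : τ3 = ⌈(((K - 1) * N : ℕ) : ℚ) / (M : ℚ)⌉₊) :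
    ∃ (a : Fin (K - 1) → Fin τ3 → ℂ) (φ : Fin N → Fin τ3 → ℂ),
      (∀ k i, a k i = 0 ∨ a k i = 1) ∧
      (∀ n i, φ n i = 0 ∨ φ n i = 1) ∧
      Function.Injective
        (fun lam : Matrix (Fin (K - 1)) (Fin N) ℂ =>
          fun (i : Fin τ3) (m : Fin M) =>
            ∑ k : Fin (K - 1), ∑ n : Fin N, φ n i * a k i * lam k n * g n m) := by
  have hbudget : (K - 1) * N ≤ τ3 * M := hτ3 ▸ Nat.le_ceil_div_mul _ hM
  refine ⟨PhaseIII.pilot M N (K - 1) τ3, PhaseIII.reflection M N (K - 1) τ3,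
    fun k i => ?_, fun n i => ?_, PhaseIII.observation_pilot_reflection_injective hM hMN hg hbudget⟩
  · unfold PhaseIII.pilot; split_ifs <;> simp
  · unfold PhaseIII.reflection; split_ifs <;> simp

/-- Theorem 2 (achievability): with `K ≥ 2`, `1 ≤ M < N`, and `g_1,…,g_N ∈ ℂ^M`
such that every subfamily of at most `M` of them is linearly independent,
setting `τ3 = ⌈(K-1)·N/M⌉` there exist pilot symbols `a k i ∈ {0,1}` and
reflection coefficients `φ n i ∈ {0,1}` making the Phase III observation map
injective. -/
theorem phaseIII_achievability_MltN
    (K M N : ℕ) (hK : 2 ≤ K) (hM : 1 ≤ M) (hMN : M < N)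
    (g : Fin N → Fin M → ℂ)
    (hg : ∀ s : Finset (Fin N), s.card ≤ M →
      LinearIndependent ℂ (fun n : s => g (n : Fin N)))
    (τ3 : ℕ) (hτ3 : τ3 = ⌈(((K - 1) * N : ℕ) : ℚ) / (M : ℚ)⌉₊) :
    ∃ (a : Fin (K - 1) → Fin τ3 → ℂ) (φ : Fin N → Fin τ3 → ℂ),
      (∀ k i, a k i = 0 ∨ a k i = 1) ∧
      (∀ n i, φ n i = 0 ∨ φ n i = 1) ∧
      Function.Injective
        (fun lam : Matrix (Fin (K - 1)) (Fin N) ℂ =>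
          fun (i : Fin τ3) (m : Fin M) =>
            ∑ k : Fin (K - 1), ∑ n : Fin N, φ n i * a k i * lam k n * g n m) :=
  phaseIII_achievability_MltN_general K M N hM hMN g hg τ3 hτ3
end
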